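/- Let 𝒯 ⊆ ℝ be a finite set and let (T_t)_{t∈𝒯} be bounded linear operators on ℓ²(ℤⁿ) such that for some C₁ < ∞, some η > 0 and every r ∈ (2,3), ‖ ‖T_t f‖_{V^r_{t∈𝒯}} ‖_{ℓ²(ℤⁿ)} ≤ C₁ (r−2)^{−η} ‖f‖_{ℓ²(ℤⁿ)} for all f ∈ ℓ²(ℤⁿ). Then for every finite index set Ξ, every collection (f_β)_{β∈Ξ} ⊂ ℓ²(ℤⁿ), and every r ∈ (2, ∞), the vector-valued variational estimate holds: ‖ ‖((T_t f_β)(x))_{β∈Ξ}‖_{V^r_{t∈𝒯}(ℓ²(Ξ))} ‖_{ℓ²_x(ℤⁿ)} ≤ C₁ (r/(r−2))^η (Σ_{β∈Ξ} ‖f_β‖²_{ℓ²(ℤⁿ)})^{1/2}. -/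

import Mathlib

open MeasureTheory Complex
open scoped ENNReal NNReal

/-- The `ℓ²` norm of a complex-valued function, valued in `ℝ≥0∞`. -/
noncomputable def l2n {ι : Type*} (f : ι → ℂ) : ℝ≥0∞ :=
  (∑' i, (‖f i‖₊ : ℝ≥0∞) ^ 2) ^ (2⁻¹ : ℝ)

/-- The `ℓ²` norm of an `ℝ≥0∞`-valued function. -/
noncomputable def l2En {ι : Type*} (f : ι → ℝ≥0∞) : ℝ≥0∞ :=
  (∑' i, f i ^ 2) ^ (2⁻¹ : ℝ)

/-- The `r`-variation seminorm of `F : T → H`. -/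
noncomputable def eVar {T H : Type*} [LinearOrder T] [NormedAddCommGroup H]
    (r : ℝ) (F : T → H) : ℝ≥0∞ :=
  ⨆ (J : ℕ) (u : Fin (J + 1) → T) (_ : Monotone u),
    (∑ j : Fin J, (‖F (u j.succ) - F (u j.castSucc)‖₊ : ℝ≥0∞) ^ r) ^ r⁻¹

/-!
Since `r ≥ 2`, Minkowski's inequality in `ℓ^{r/2}` bounds the `ℓ²(Ξ)`-valued `r`-variation
pointwise by the `ℓ²(Ξ)`-norm of the scalar `r`-variations. These are dominated by the
`ρ`-variations for `ρ = 2 + (r - 2) / r`, which lies in `(2, 3)` and below `r`. Exchanging the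
two `ℓ²` norms and applying the hypothesis at the exponent `ρ` gives the bound, with
`(ρ - 2)^{-η} = (r / (r - 2))^η`.
-/

namespace ENNReal

variable {ι κ : Type*}

theorem rpow_sum_le_sum_rpow (s : Finset ι) (a : ι → ℝ≥0∞) {p : ℝ} (hp₀ : 0 < p)
    (hp₁ : p ≤ 1) : (∑ i ∈ s, a i) ^ p ≤ ∑ i ∈ s, a i ^ p := by
  induction s using Finset.cons_induction with
  | empty => simp [zero_rpow_of_pos hp₀]
  | cons i s _ ih =>
    rw [Finset.sum_cons, Finset.sum_cons]
    exact (rpow_add_le_add_rpow _ _ hp₀.le hp₁).trans (by gcongr)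

theorem Lp_le_Lp_of_le (s : Finset ι) (f : ι → ℝ≥0∞) {p q : ℝ} (hp : 0 < p) (hpq : p ≤ q) :
    (∑ i ∈ s, f i ^ q) ^ q⁻¹ ≤ (∑ i ∈ s, f i ^ p) ^ p⁻¹ := by
  have hq : 0 < q := hp.trans_le hpq
  have key : (∑ i ∈ s, f i ^ q) ^ (p / q) ≤ ∑ i ∈ s, f i ^ p := by
    refine (rpow_sum_le_sum_rpow s _ (div_pos hp hq) ((div_le_one hq).2 hpq)).trans_eq ?_
    refine Finset.sum_congr rfl fun i _ => ?_
    rw [← rpow_mul, mul_div_cancel₀ _ hq.ne']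
  calc (∑ i ∈ s, f i ^ q) ^ q⁻¹ = ((∑ i ∈ s, f i ^ q) ^ (p / q)) ^ p⁻¹ := by
        rw [← rpow_mul]; congr 1; field_simp
    _ ≤ (∑ i ∈ s, f i ^ p) ^ p⁻¹ := rpow_le_rpow key (inv_nonneg.2 hp.le)

theorem Lp_sum_le_sum_Lp (s : Finset ι) (t : Finset κ) (g : κ → ι → ℝ≥0∞) {p : ℝ}
    (hp : 1 ≤ p) :
    (∑ i ∈ s, (∑ k ∈ t, g k i) ^ p) ^ p⁻¹ ≤ ∑ k ∈ t, (∑ i ∈ s, g k i ^ p) ^ p⁻¹ := by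
  have hp₀ : 0 < p := zero_lt_one.trans_le hp
  induction t using Finset.cons_induction with
  | empty => simp [zero_rpow_of_pos hp₀, zero_rpow_of_pos (inv_pos.2 hp₀)]
  | cons k t _ ih =>
    simp only [Finset.sum_cons]
    calc (∑ i ∈ s, (g k i + ∑ k ∈ t, g k i) ^ p) ^ p⁻¹
        ≤ (∑ i ∈ s, g k i ^ p) ^ p⁻¹ + (∑ i ∈ s, (∑ k ∈ t, g k i) ^ p) ^ p⁻¹ := by
          simpa only [one_div] using Lp_add_le s (g k) (fun i => ∑ k ∈ t, g k i) hp
      _ ≤ _ := by gcongr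

theorem Lp_Lr_le_Lr_Lp (s : Finset ι) (t : Finset κ) (b : ι → κ → ℝ≥0∞) {p r : ℝ}
    (hp : 0 < p) (hpr : p ≤ r) :
    (∑ i ∈ s, ((∑ k ∈ t, b i k ^ p) ^ p⁻¹) ^ r) ^ r⁻¹ ≤
      (∑ k ∈ t, ((∑ i ∈ s, b i k ^ r) ^ r⁻¹) ^ p) ^ p⁻¹ := by
  have hr : 0 < r := hp.trans_le hpr
  have minkowski := Lp_sum_le_sum_Lp s t (fun k i => b i k ^ p) ((one_le_div hp).2 hpr)
  calc (∑ i ∈ s, ((∑ k ∈ t, b i k ^ p) ^ p⁻¹) ^ r) ^ r⁻¹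
      = ((∑ i ∈ s, (∑ k ∈ t, b i k ^ p) ^ (r / p)) ^ (r / p)⁻¹) ^ p⁻¹ := by
        rw [← rpow_mul]
        congr 1
        · refine Finset.sum_congr rfl fun i _ => ?_
          rw [← rpow_mul, inv_mul_eq_div]
        · field_simp
    _ ≤ (∑ k ∈ t, (∑ i ∈ s, (b i k ^ p) ^ (r / p)) ^ (r / p)⁻¹) ^ p⁻¹ :=
        rpow_le_rpow minkowski (inv_nonneg.2 hp.le)
    _ = (∑ k ∈ t, ((∑ i ∈ s, b i k ^ r) ^ r⁻¹) ^ p) ^ p⁻¹ := by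
        congr 1
        refine Finset.sum_congr rfl fun k _ => ?_
        rw [← rpow_mul, inv_div]
        congr 1
        · refine Finset.sum_congr rfl fun i _ => ?_
          rw [← rpow_mul, mul_div_cancel₀ _ hp.ne']
        · field_simp

end ENNReal

section L2

variable {ι κ : Type*}

theorem l2En_mono {f g : ι → ℝ≥0∞} (h : ∀ i, f i ≤ g i) : l2En f ≤ l2En g := by
  unfold l2En
  gcongr with i
  exact h i

theorem l2En_sq (f : ι → ℝ≥0∞) : l2En f ^ 2 = ∑' i, f i ^ 2 := by
  rw [l2En, ← ENNReal.rpow_natCast, ← ENNReal.rpow_mul]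
  norm_num

theorem l2En_const_mul (c : ℝ≥0∞) (f : ι → ℝ≥0∞) :
    l2En (fun i => c * f i) = c * l2En f := by
  simp only [l2En, mul_pow, ENNReal.tsum_mul_left]
  rw [ENNReal.mul_rpow_of_nonneg _ _ (by norm_num), ← ENNReal.rpow_natCast, ← ENNReal.rpow_mul]
  norm_num

theorem l2En_comm (E : ι → κ → ℝ≥0∞) :
    l2En (fun i => l2En (E i)) = l2En fun k => l2En fun i => E i k := by
  rw [l2En, l2En]
  simp only [l2En_sq]
  rw [ENNReal.tsum_comm]

end L2

section Variation

variable {T H : Type*} [LinearOrder T] [NormedAddCommGroup H]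

theorem sum_rpow_le_eVar (r : ℝ) (F : T → H) {J : ℕ} {u : Fin (J + 1) → T} (hu : Monotone u) :
    (∑ j : Fin J, (‖F (u j.succ) - F (u j.castSucc)‖₊ : ℝ≥0∞) ^ r) ^ r⁻¹ ≤ eVar r F :=
  le_iSup_of_le J (le_iSup_of_le u (le_iSup_of_le hu le_rfl))

theorem eVar_le_eVar_of_exponent_le {p r : ℝ} (hp : 0 < p) (hpr : p ≤ r) (F : T → H) :
    eVar r F ≤ eVar p F :=
  iSup_le fun _ => iSup₂_le fun _ hu =>
    (ENNReal.Lp_le_Lp_of_le _ _ hp hpr).trans (sum_rpow_le_eVar p F hu)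

theorem eVar_piLp_two_le {Ξ : Type*} [Fintype Ξ] {E : Ξ → Type*}
    [∀ β, NormedAddCommGroup (E β)] {r : ℝ} (hr : 2 ≤ r) (G : (β : Ξ) → T → E β) :
    eVar r (fun t => (WithLp.toLp 2 (fun β => G β t) : PiLp 2 E)) ≤
      l2En fun β => eVar r (G β) := by
  refine iSup_le fun J => iSup₂_le fun u hu => ?_
  have hnorm : ∀ j : Fin J,
      (‖(WithLp.toLp 2 (fun β => G β (u j.succ)) : PiLp 2 E) -
          WithLp.toLp 2 (fun β => G β (u j.castSucc))‖₊ : ℝ≥0∞) =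
        (∑ β, (‖G β (u j.succ) - G β (u j.castSucc)‖₊ : ℝ≥0∞) ^ (2 : ℝ)) ^ (2 : ℝ)⁻¹ := by
    intro j
    rw [← enorm_eq_nnnorm, ← edist_eq_enorm_sub, PiLp.edist_eq_sum (by norm_num)]
    simp [edist_eq_enorm_sub, enorm_eq_nnnorm]
  calc (∑ j : Fin J, (‖(WithLp.toLp 2 (fun β => G β (u j.succ)) : PiLp 2 E) -
          WithLp.toLp 2 (fun β => G β (u j.castSucc))‖₊ : ℝ≥0∞) ^ r) ^ r⁻¹
      = (∑ j : Fin J, ((∑ β, (‖G β (u j.succ) - G β (u j.castSucc)‖₊ : ℝ≥0∞) ^ (2 : ℝ))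
          ^ (2 : ℝ)⁻¹) ^ r) ^ r⁻¹ := by simp only [hnorm]
    _ ≤ (∑ β, ((∑ j : Fin J, (‖G β (u j.succ) - G β (u j.castSucc)‖₊ : ℝ≥0∞) ^ r) ^ r⁻¹)
          ^ (2 : ℝ)) ^ (2 : ℝ)⁻¹ := ENNReal.Lp_Lr_le_Lr_Lp _ _ _ two_pos hr
    _ ≤ (∑ β, eVar r (G β) ^ (2 : ℝ)) ^ (2 : ℝ)⁻¹ := by
        gcongr with β
        exact sum_rpow_le_eVar r (G β) hu
    _ = l2En fun β => eVar r (G β) := by simp only [l2En, tsum_fintype, ENNReal.rpow_two]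

end Variation

theorem stmt7_general (n : ℕ) (C₁ : ℝ≥0) (η : ℝ)
    (𝒯 : Finset ℝ) (T : ℝ → ((Fin n → ℤ) → ℂ) →ₗ[ℂ] ((Fin n → ℤ) → ℂ))
    (hTvar : ∀ r : ℝ, 2 < r → r < 3 → ∀ f : (Fin n → ℤ) → ℂ,
      l2En (fun x => eVar r (fun t : ↥𝒯 => T t.1 f x))
        ≤ (C₁ : ℝ≥0∞) * ENNReal.ofReal ((r - 2) ^ (-η)) * l2n f) :
    ∀ (Ξ : Type) (_ : Fintype Ξ) (f : Ξ → (Fin n → ℤ) → ℂ),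
    ∀ r : ℝ, 2 < r →
      l2En (fun x => eVar r (fun t : ↥𝒯 =>
          ((WithLp.equiv 2 (Ξ → ℂ)).symm (fun β => T t.1 (f β) x) : EuclideanSpace ℂ Ξ)))
        ≤ (C₁ : ℝ≥0∞) * ENNReal.ofReal ((r / (r - 2)) ^ η) *
            (∑ β, l2n (f β) ^ 2) ^ (2⁻¹ : ℝ) := by
  intro Ξ _ f r hr
  have hr₂ : 0 < r - 2 := sub_pos.2 hr
  obtain ⟨ρ, hρ₂, hρ₃, hρr, hρ⟩ :
      ∃ ρ : ℝ, 2 < ρ ∧ ρ < 3 ∧ ρ ≤ r ∧ ρ - 2 = (r - 2) / r := by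
    have hr₀ : 0 < r := by linarith
    refine ⟨2 + (r - 2) / r, by linarith [div_pos hr₂ hr₀], ?_, ?_, by ring⟩
    · linarith [(div_lt_one hr₀).2 (by linarith : r - 2 < r)]
    · linarith [div_le_self hr₂.le (by linarith : (1 : ℝ) ≤ r)]
  have hconst : (ρ - 2) ^ (-η) = (r / (r - 2)) ^ η := by
    rw [hρ, Real.rpow_neg (by positivity), ← Real.inv_rpow (by positivity), inv_div]
  calc l2En (fun x => eVar r fun t : ↥𝒯 =>
          ((WithLp.equiv 2 (Ξ → ℂ)).symm (fun β => T t.1 (f β) x) : EuclideanSpace ℂ Ξ))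
      ≤ l2En fun x => l2En fun β => eVar ρ fun t : ↥𝒯 => T t.1 (f β) x :=
        l2En_mono fun x => (eVar_piLp_two_le (by linarith) _).trans
          (l2En_mono fun β => eVar_le_eVar_of_exponent_le (by linarith) hρr _)
    _ = l2En fun β => l2En fun x => eVar ρ fun t : ↥𝒯 => T t.1 (f β) x := l2En_comm _
    _ ≤ l2En fun β => (C₁ : ℝ≥0∞) * ENNReal.ofReal ((r / (r - 2)) ^ η) * l2n (f β) :=
        l2En_mono fun β => hconst ▸ hTvar ρ hρ₂ hρ₃ (f β)
    _ = (C₁ : ℝ≥0∞) * ENNReal.ofReal ((r / (r - 2)) ^ η) *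
          (∑ β, l2n (f β) ^ 2) ^ (2⁻¹ : ℝ) := by
        rw [l2En_const_mul, l2En, tsum_fintype]

/-- the scalar variational estimate upgrades to a vector-valued
(`ℓ²(Ξ)`-valued) variational estimate, for all `r ∈ (2,∞)`. -/
theorem stmt7 (n : ℕ) (hn : 1 ≤ n) (C₁ : ℝ≥0) (η : ℝ) (hη : 0 < η)
    (𝒯 : Finset ℝ) (T : ℝ → ((Fin n → ℤ) → ℂ) →ₗ[ℂ] ((Fin n → ℤ) → ℂ))
    (hTbdd : ∀ t ∈ 𝒯, ∃ M : ℝ≥0, ∀ f : (Fin n → ℤ) → ℂ,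
      l2n (T t f) ≤ (M : ℝ≥0∞) * l2n f)
    (hTvar : ∀ r : ℝ, 2 < r → r < 3 → ∀ f : (Fin n → ℤ) → ℂ,
      l2En (fun x => eVar r (fun t : ↥𝒯 => T t.1 f x))
        ≤ (C₁ : ℝ≥0∞) * ENNReal.ofReal ((r - 2) ^ (-η)) * l2n f) :
    ∀ (Ξ : Type) (_ : Fintype Ξ) (f : Ξ → (Fin n → ℤ) → ℂ),
    ∀ r : ℝ, 2 < r →
      l2En (fun x => eVar r (fun t : ↥𝒯 =>
          ((WithLp.equiv 2 (Ξ → ℂ)).symm (fun β => T t.1 (f β) x) : EuclideanSpace ℂ Ξ)))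
        ≤ (C₁ : ℝ≥0∞) * ENNReal.ofReal ((r / (r - 2)) ^ η) *
            (∑ β, l2n (f β) ^ 2) ^ (2⁻¹ : ℝ) :=
  stmt7_general n C₁ η 𝒯 T hTvar
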